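/- arXiv:2205.08428 — 2 statements merged into one kernel-verified Lean document; each statement's English description precedes it below -/
import Mathlib

section
/- Let μ(t) = 2 cot t + ε · β(t) on (0, t_c] where β(t) = cot t, t_c = min{π/4, T/2}, and ε > 0. Then the quantity Z_μ(t) := (3/2)μ(t)² + 2μ'(t) − 6cot²t + 4/sin²t equals (ε/(2sin²t))·[(3ε+12)cos²t − 4] and is strictly positive for all t ∈ (0, t_c]. -/
open Real

/-!
With `μ = (2 + ε) cot` one has `μ' = -(2 + ε) / sin²`, and substituting into `Z_μ`
collapses it to `(ε / (2 sin² t)) ((3ε + 12) cos² t − 4)`. On `(0, π/4]` we have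
`cos² t ≥ 1/2`, so the bracket is at least `(3ε + 12)/2 − 4 = 3ε/2 + 2 > 0`.
-/

theorem Real.hasDerivAt_cos_div_sin {t : ℝ} (ht : sin t ≠ 0) :
    HasDerivAt (fun s => cos s / sin s) (-1 / sin t ^ 2) t := by
  refine ((hasDerivAt_cos t).div (hasDerivAt_sin t) ht).congr_deriv ?_
  rw [← sin_sq_add_cos_sq t]
  ring

theorem Real.half_le_cos_sq_of_abs_le_pi_div_four {t : ℝ} (ht : |t| ≤ π / 4) :
    1 / 2 ≤ cos t ^ 2 := by
  obtain ⟨hl, hu⟩ := abs_le.mp ht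
  have h2t : 0 ≤ cos (2 * t) := cos_nonneg_of_neg_pi_div_two_le_of_le (by linarith) (by linarith)
  rw [cos_sq]
  linarith

theorem deriv_two_add_mul_cot (ε : ℝ) {t : ℝ} (ht : sin t ≠ 0) :
    deriv (fun s => 2 * cos s / sin s + ε * (cos s / sin s)) t = -(2 + ε) / sin t ^ 2 := by
  have h := (hasDerivAt_cos_div_sin ht).const_mul (2 + ε)
  convert h.deriv using 1
  · congr 1
    ext s
    ring
  · ring

theorem Z_two_add_mul_cot_eq (ε : ℝ) {t : ℝ} (ht : sin t ≠ 0) :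
    (3 / 2) * (2 * cos t / sin t + ε * (cos t / sin t)) ^ 2 + 2 * (-(2 + ε) / sin t ^ 2)
      - 6 * (cos t / sin t) ^ 2 + 4 / sin t ^ 2
      = ε / (2 * sin t ^ 2) * ((3 * ε + 12) * cos t ^ 2 - 4) := by
  field_simp
  ring

theorem stmt3_general (T ε : ℝ) (hε : 0 < ε)
    (tc : ℝ) (htc : tc = min (π / 4) (T / 2))
    (μ Z : ℝ → ℝ)
    (hμ : μ = fun t => 2 * Real.cos t / Real.sin t
      + ε * (Real.cos t / Real.sin t))
    (hZ : Z = fun t => (3 / 2) * μ t ^ 2 + 2 * deriv μ t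
      - 6 * (Real.cos t / Real.sin t) ^ 2 + 4 / Real.sin t ^ 2)
    (t : ℝ) (ht : t ∈ Set.Ioc 0 tc) :
    Z t = ε / (2 * Real.sin t ^ 2) * ((3 * ε + 12) * Real.cos t ^ 2 - 4) ∧
    0 < Z t := by
  obtain ⟨ht0, htle⟩ := ht
  have ht4 : t ≤ π / 4 := htle.trans (htc ▸ min_le_left _ _)
  have hsin : 0 < sin t := sin_pos_of_pos_of_lt_pi ht0 (by linarith [pi_pos])
  have hcos : 1 / 2 ≤ cos t ^ 2 :=
    half_le_cos_sq_of_abs_le_pi_div_four (abs_le.mpr ⟨by linarith, ht4⟩)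
  have hZt : Z t = ε / (2 * sin t ^ 2) * ((3 * ε + 12) * cos t ^ 2 - 4) := by
    subst hZ hμ
    beta_reduce
    rw [deriv_two_add_mul_cot ε hsin.ne']
    exact Z_two_add_mul_cot_eq ε hsin.ne'
  refine ⟨hZt, hZt ▸ ?_⟩
  have hbracket : 0 < (3 * ε + 12) * cos t ^ 2 - 4 := by nlinarith
  positivity

/-- For `μ(t) = 2 cot t + ε cot t` on `(0, t_c]` with `t_c = min{π/4, T/2}`
and `ε > 0`, the quantity `Z_μ(t) = (3/2)μ² + 2μ' − 6cot²t + 4/sin²t`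
equals `(ε/(2sin²t))·((3ε+12)cos²t − 4)` and is strictly positive on
`(0, t_c]`. -/
theorem stmt3 (T ε : ℝ) (hT : 0 < T) (hε : 0 < ε)
    (tc : ℝ) (htc : tc = min (π / 4) (T / 2))
    (μ Z : ℝ → ℝ)
    (hμ : μ = fun t => 2 * Real.cos t / Real.sin t
      + ε * (Real.cos t / Real.sin t))
    (hZ : Z = fun t => (3 / 2) * μ t ^ 2 + 2 * deriv μ t
      - 6 * (Real.cos t / Real.sin t) ^ 2 + 4 / Real.sin t ^ 2)
    (t : ℝ) (ht : t ∈ Set.Ioc 0 tc) :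
    Z t = ε / (2 * Real.sin t ^ 2) * ((3 * ε + 12) * Real.cos t ^ 2 - 4) ∧
    0 < Z t :=
  stmt3_general T ε hε tc htc μ Z hμ hZ t ht
end

section
/- Let μ_α(t) = −2 tan(πt/(2α)) on (−α, α) for α ∈ (0, π/2), and Ĥ(t) = −2 tan t. Define Z_{μ_α}(t) = (3/2)(μ_α² − Ĥ²) + 2(μ_α' − Ĥ'). Then there exists t_c ∈ (0, π/2) (independent of α near π/2) such that Z_{μ_α}(t) > 0 for |t| ∈ (t_c, α), and there exists a constant C(α) ≤ 0 with cos²(t)·Z_{μ_α}(t) ≥ C(α) for all t ∈ (−α, α), where C(α) → 0 as α → π/2. -/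
open Real Filter

/-! With `c = π / (2α) > 1`, the identity `1 / cos² = 1 + tan²` collapses the barrier
quantity to `Z = (6 - 4c) / cos² (c t) - 2 / cos² t`. Since `cos² (c t) ≤ cos² t`, this gives
`cos² t · Z ≥ 4 - 4c`, which tends to `0` as `α → π/2`. For positivity near the ends, the
tangent line of the convex function `tan` at `s = |t|` gives
`tan (c s) ≥ tan s + (c - 1) s / cos² s`, whence
`Z ≥ (c - 1) / cos² s · (2 (6 - 4c) s tan s - 4)`; this is positive as soon as
`s tan s > s² > 9/4` and `c < 21/20`, which holds for `3/2 < s < α`. -/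

lemma Real.tan_add_div_cos_sq_le_tan {x y : ℝ} (hx : 0 ≤ x) (hxy : x ≤ y) (hy : y < π / 2) :
    tan x + (y - x) / cos x ^ 2 ≤ tan y := by
  rcases hxy.eq_or_lt with rfl | hlt
  · simp
  have hcos : ∀ z ∈ Set.Icc x y, 0 < cos z := fun z hz =>
    cos_pos_of_mem_Ioo ⟨by linarith [pi_pos, hz.1], hz.2.trans_lt hy⟩
  obtain ⟨ξ, hξ, hslope⟩ := exists_hasDerivAt_eq_slope tan (fun z => 1 / cos z ^ 2) hlt
    (fun z hz => (continuousAt_tan.2 (hcos z hz).ne').continuousWithinAt)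
    (fun z hz => hasDerivAt_tan (hcos z (Set.Ioo_subset_Icc_self hz)).ne')
  have hcosξ : cos ξ ≤ cos x :=
    cos_le_cos_of_nonneg_of_le_pi hx (by linarith [hξ.2, pi_pos]) hξ.1.le
  have hξ₀ : 0 < cos ξ := hcos ξ (Set.Ioo_subset_Icc_self hξ)
  have hsec : 1 / cos x ^ 2 ≤ 1 / cos ξ ^ 2 :=
    one_div_le_one_div_of_le (pow_pos hξ₀ 2) (pow_le_pow_left₀ hξ₀.le hcosξ 2)
  rw [eq_div_iff (sub_ne_zero.2 hlt.ne')] at hslope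
  calc tan x + (y - x) / cos x ^ 2 = tan x + (y - x) * (1 / cos x ^ 2) := by ring
    _ ≤ tan x + (y - x) * (1 / cos ξ ^ 2) := by gcongr
    _ = tan y := by rw [mul_comm, hslope]; ring

lemma barrier_eq_of_cos_ne_zero {c t : ℝ} (hct : cos (c * t) ≠ 0) (ht : cos t ≠ 0) :
    (3 / 2) * ((-2 * tan (c * t)) ^ 2 - (-2 * tan t) ^ 2)
        + 2 * (deriv (fun x => -2 * tan (c * x)) t - deriv (fun x => -2 * tan x) t)
      = (6 - 4 * c) / cos (c * t) ^ 2 - 2 / cos t ^ 2 := by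
  have hμ : HasDerivAt (fun x => -2 * tan (c * x)) (-2 * (1 / cos (c * t) ^ 2 * c)) t :=
    ((hasDerivAt_tan hct).comp t
      ((hasDerivAt_id t).const_mul c |>.congr_deriv (mul_one c))).const_mul (-2)
  have hH : HasDerivAt (fun x => -2 * tan x) (-2 * (1 / cos t ^ 2)) t :=
    (hasDerivAt_tan ht).const_mul (-2)
  rw [hμ.deriv, hH.deriv, tan_eq_sin_div_cos, tan_eq_sin_div_cos]
  field_simp
  rw [sin_sq, sin_sq]
  ring

lemma four_sub_four_mul_le_cos_sq_mul_barrier {c s : ℝ} (hc : 1 ≤ c) (hc' : c ≤ 3 / 2)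
    (hs : 0 ≤ s) (hcs : c * s < π / 2) :
    4 - 4 * c ≤ cos s ^ 2 * ((6 - 4 * c) / cos (c * s) ^ 2 - 2 / cos s ^ 2) := by
  have hs_le : s ≤ c * s := le_mul_of_one_le_left hs hc
  have hcos_cs : 0 < cos (c * s) := cos_pos_of_mem_Ioo ⟨by linarith [pi_pos], hcs⟩
  have hcos_s : 0 < cos s := cos_pos_of_mem_Ioo ⟨by linarith [pi_pos], by linarith⟩
  have hcos_le : cos (c * s) ^ 2 ≤ cos s ^ 2 :=
    pow_le_pow_left₀ hcos_cs.le (cos_le_cos_of_nonneg_of_le_pi hs (by linarith [pi_pos]) hs_le) 2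
  have hratio : 1 ≤ cos s ^ 2 / cos (c * s) ^ 2 := (one_le_div (by positivity)).2 hcos_le
  calc 4 - 4 * c ≤ (6 - 4 * c) * (cos s ^ 2 / cos (c * s) ^ 2) - 2 := by nlinarith
    _ = _ := by field_simp

lemma barrier_pos {c s : ℝ} (hc : 1 < c) (hs : 0 ≤ s) (hcs : c * s < π / 2)
    (hsT : 2 < (6 - 4 * c) * s * tan s) :
    0 < (6 - 4 * c) / cos (c * s) ^ 2 - 2 / cos s ^ 2 := by
  have hcos_cs : cos (c * s) ≠ 0 := (cos_pos_of_mem_Ioo ⟨by nlinarith [pi_pos], hcs⟩).ne'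
  have hcos_s : cos s ≠ 0 := (cos_pos_of_mem_Ioo ⟨by linarith [pi_pos], by nlinarith⟩).ne'
  have htan_s : 0 ≤ tan s := tan_nonneg_of_nonneg_of_le_pi_div_two hs (by nlinarith)
  have htan_cs : tan s + (c - 1) * s * (1 + tan s ^ 2) ≤ tan (c * s) := by
    have := tan_add_div_cos_sq_le_tan hs (le_mul_of_one_le_left hs hc.le) hcs
    rwa [div_eq_mul_inv, ← inv_one_add_tan_sq hcos_s, inv_inv, ← sub_one_mul] at this
  have hc6 : 0 < 6 - 4 * c := by nlinarith [mul_nonneg hs htan_s]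
  have hsq := pow_le_pow_left₀ (by positivity) htan_cs 2
  rw [div_eq_mul_inv, div_eq_mul_inv, ← inv_one_add_tan_sq hcos_cs, ← inv_one_add_tan_sq hcos_s,
    inv_inv, inv_inv]
  nlinarith [mul_pos (mul_pos (sub_pos.2 hc) (by positivity : 0 < 1 + tan s ^ 2))
      (sub_pos.2 hsT),
    mul_le_mul_of_nonneg_left hsq hc6.le,
    mul_nonneg hc6.le (sq_nonneg ((c - 1) * s * (1 + tan s ^ 2)))]

lemma barrier_eq {α t : ℝ} (hα : 0 < α) (hαπ : α ≤ π / 2) (ht : |t| < α) :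
    (3 / 2) * ((-2 * tan (π * t / (2 * α))) ^ 2 - (-2 * tan t) ^ 2)
        + 2 * (deriv (fun x => -2 * tan (π * x / (2 * α))) t - deriv (fun x => -2 * tan x) t)
      = (6 - 4 * (π / (2 * α))) / cos (π / (2 * α) * |t|) ^ 2 - 2 / cos |t| ^ 2 := by
  have harg (x : ℝ) : π * x / (2 * α) = π / (2 * α) * x := mul_div_right_comm π x (2 * α)
  have hct : |π / (2 * α) * t| < π / 2 := by
    rw [abs_mul, abs_of_pos (by positivity), div_mul_eq_mul_div,
      div_lt_div_iff₀ (by positivity) two_pos]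
    nlinarith [pi_pos]
  have hcos : cos (π / (2 * α) * |t|) = cos (π / (2 * α) * t) := by
    rw [← cos_abs (_ * t), abs_mul, abs_of_pos (by positivity : 0 < π / (2 * α))]
  simp only [harg]
  rw [barrier_eq_of_cos_ne_zero (cos_pos_of_mem_Ioo (abs_lt.1 hct)).ne'
      (cos_pos_of_mem_Ioo (abs_lt.1 (ht.trans_le hαπ))).ne', hcos, cos_abs]

/-- Barrier estimate for the doubly punctured sphere: with
`Ĥ(t) = −2 tan t` and `μ_α(t) = −2 tan(πt/(2α))` on `(−α, α)`
(`α ∈ (0, π/2)`), define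
`Z_{μ_α}(t) = (3/2)(μ_α² − Ĥ²) + 2(μ_α' − Ĥ')`. Then there exists
`t_c ∈ (0, π/2)`, independent of `α` near `π/2`, such that
`Z_{μ_α}(t) > 0` for `|t| ∈ (t_c, α)`, and a constant `C(α) ≤ 0` with
`cos²t · Z_{μ_α}(t) ≥ C(α)` for all `t ∈ (−α, α)`, where `C(α) → 0` as
`α → π/2`. -/
theorem stmt17 (H : ℝ → ℝ) (hH : H = fun t => -2 * Real.tan t)
    (μ : ℝ → ℝ → ℝ)
    (hμ : μ = fun α t => -2 * Real.tan (π * t / (2 * α)))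
    (Z : ℝ → ℝ → ℝ)
    (hZ : Z = fun α t => (3 / 2) * ((μ α t) ^ 2 - (H t) ^ 2)
      + 2 * (deriv (μ α) t - deriv H t)) :
    ∃ tc ∈ Set.Ioo 0 (π / 2), ∃ C : ℝ → ℝ,
      (∀ α ∈ Set.Ioo tc (π / 2),
        (∀ t, tc < |t| → |t| < α → 0 < Z α t) ∧
        C α ≤ 0 ∧
        (∀ t ∈ Set.Ioo (-α) α, C α ≤ Real.cos t ^ 2 * Z α t)) ∧
      Tendsto C (nhdsWithin (π / 2) (Set.Iio (π / 2))) (nhds 0) := by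
  subst hH hμ hZ
  have hπ₃ := pi_gt_three
  refine ⟨3 / 2, ⟨by norm_num, by linarith⟩, fun α => 4 - 4 * (π / (2 * α)),
    fun α ⟨hα, hαπ⟩ => ?_, ?_⟩
  · have hα₀ : 0 < α := by linarith
    have hc₁ : 1 < π / (2 * α) := by rw [one_lt_div (by positivity)]; linarith
    have hc₂ : π / (2 * α) < 21 / 20 := by
      rw [div_lt_iff₀ (by positivity)]; nlinarith [pi_lt_d2]
    have hcs : ∀ s, s < α → π / (2 * α) * s < π / 2 := fun s hs => by
      rw [div_mul_eq_mul_div, div_lt_div_iff₀ (by positivity) two_pos]; nlinarith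
    refine ⟨fun t htc htα => ?_, by linarith, fun t ht => ?_⟩
    · beta_reduce
      rw [barrier_eq hα₀ hαπ.le htα]
      refine barrier_pos hc₁ (abs_nonneg t) (hcs _ htα) ?_
      have hst : 9 / 4 < |t| * tan |t| := by nlinarith [lt_tan (by linarith) (htα.trans hαπ)]
      nlinarith
    · beta_reduce
      rw [barrier_eq hα₀ hαπ.le (abs_lt.2 ht), ← cos_abs t]
      exact four_sub_four_mul_le_cos_sq_mul_barrier hc₁.le (by linarith) (abs_nonneg t)
        (hcs _ (abs_lt.2 ht))
  · have hC : ContinuousAt (fun α => 4 - 4 * (π / (2 * α))) (π / 2) := by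
      have : 2 * (π / 2) ≠ 0 := by positivity
      fun_prop (disch := assumption)
    have hC₀ : 4 - 4 * (π / (2 * (π / 2))) = 0 := by field_simp; norm_num
    exact (hC₀ ▸ hC.tendsto).mono_left nhdsWithin_le_nhds
end
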